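/- arXiv:2505.07011 — 4 statements merged into one kernel-verified Lean document; each statement's English description precedes it below -/
import Mathlib

section
/- Let S be a finite nonempty set with n = |S| elements, let f : S → ℝ satisfy f(x) > 0 for all x ∈ S, and let s > 0. Then (1/2)·∑_{x∈S} | f(x)/(∑_{y∈S} f(y)) − 1/n | ≤ (1/(n·s))·∑_{x∈S} | f(x) − s |. -/
/-- The normalization step in the proof of Theorem 1: the total variation
distance between the normalization of `f` and the uniform distribution on `S`
is controlled by the deviations of `f` from the constant `s`. -/
theorem stmt_4 {α : Type*} (S : Finset α) (hS : S.Nonempty) (f : α → ℝ)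
    (hf : ∀ x ∈ S, 0 < f x) (s : ℝ) (hs : 0 < s) :
    (1 / 2) * ∑ x ∈ S, |f x / (∑ y ∈ S, f y) - 1 / (S.card : ℝ)| ≤
      (1 / ((S.card : ℝ) * s)) * ∑ x ∈ S, |f x - s| := by
  have hn0 : (0:ℝ) < (S.card : ℝ) := by exact_mod_cast Finset.card_pos.mpr hS
  have hF : 0 < ∑ y ∈ S, f y := Finset.sum_pos hf hS
  set F := ∑ y ∈ S, f y with hFdef
  set n : ℝ := (S.card : ℝ) with hndef
  set D := ∑ x ∈ S, |f x - s| with hDdef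
  have hns : 0 < n * s := by positivity
  have hdiff : |n * s - F| ≤ D := by
    have h1 : n * s - F = ∑ x ∈ S, (s - f x) := by
      rw [Finset.sum_sub_distrib, Finset.sum_const, nsmul_eq_mul, hFdef, hndef]
    rw [h1]
    calc |∑ x ∈ S, (s - f x)| ≤ ∑ x ∈ S, |s - f x| := Finset.abs_sum_le_sum_abs _ _
      _ = D := by simp [hDdef, abs_sub_comm]
  have key : ∑ x ∈ S, |f x / F - 1 / n| ≤ 2 * (D / (n * s)) := by
    calc ∑ x ∈ S, |f x / F - 1 / n|
        ≤ ∑ x ∈ S, (f x * |1 / F - 1 / (n * s)| + |f x - s| / (n * s)) := by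
          apply Finset.sum_le_sum
          intro x hx
          have h1 : |f x / F - 1 / n| ≤ |f x / F - f x / (n * s)| + |f x / (n * s) - 1 / n| :=
            abs_sub_le _ _ _
          have h2 : |f x / F - f x / (n * s)| = f x * |1 / F - 1 / (n * s)| := by
            rw [show f x / F - f x / (n * s) = f x * (1 / F - 1 / (n * s)) by ring,
              abs_mul, abs_of_pos (hf x hx)]
          have h3 : |f x / (n * s) - 1 / n| = |f x - s| / (n * s) := by
            have he : f x / (n * s) - 1 / n = (f x - s) / (n * s) := by
              field_simp
            rw [he, abs_div, abs_of_pos hns]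
          linarith
      _ = F * |1 / F - 1 / (n * s)| + D / (n * s) := by
          rw [Finset.sum_add_distrib, ← Finset.sum_mul, ← Finset.sum_div]
      _ ≤ D / (n * s) + D / (n * s) := by
          have heq : F * |1 / F - 1 / (n * s)| = |n * s - F| / (n * s) := by
            rw [show F * |1 / F - 1 / (n * s)| = |F * (1 / F - 1 / (n * s))| by
              rw [abs_mul, abs_of_pos hF]]
            rw [show F * (1 / F - 1 / (n * s)) = (n * s - F) / (n * s) by
              field_simp]
            rw [abs_div, abs_of_pos hns]
          rw [heq]
          gcongr
      _ = 2 * (D / (n * s)) := by ring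
  have : (1 / (n * s)) * D = D / (n * s) := by ring
  linarith
end

section
/- Let ℓ₁ < ℓ₂ be natural numbers with ℓ₁ ≥ 1, set S = {ℓ₁, …, ℓ₂}, let a > 0, φ ∈ [0,1], and let κ, κ' be reals with κ > ℓ₂ and κ' > ℓ₂. For each ℓ ∈ S let φ_ℓ ∈ [0, φ] and K(ℓ) > 0, and define for τ ∈ {κ, κ'}: g_τ(ℓ) = ℓ/(1 − e^{−a(τ−ℓ)}) + 1/(1 − e^{−a}), F_τ(ℓ) = K(ℓ)·e^{−a·φ_ℓ·g_τ(ℓ)}. Define p*(ℓ) = (1/F_κ(ℓ))/(∑_{ℓ'∈S} 1/F_κ(ℓ')) and, for τ ∈ {κ, κ'}, q_τ(ℓ) = p*(ℓ)F_τ(ℓ)/(∑_{ℓ'∈S} p*(ℓ')F_τ(ℓ')). Then the total variation distance satisfies (1/2)∑_{ℓ∈S} |q_{κ'}(ℓ) − q_κ(ℓ)| ≤ (1/(ℓ₂−ℓ₁))·∑_{ℓ∈S} (e^{a·φ·Δ(ℓ)} − 1), where Δ(ℓ) = ℓ·| 1/(1 − e^{−a(κ'−ℓ)}) − 1/(1 −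 e^{−a(κ−ℓ)}) |. -/
open Finset

lemma mad_bound (S : Finset ℕ) (η : ℕ → ℝ) (hη : ∀ ℓ ∈ S, 0 ≤ η ℓ) :
    ∑ ℓ ∈ S, |η ℓ - (∑ m ∈ S, η m) / (S.card : ℝ)| ≤
      2 * (((S.card : ℝ) - 1) / (S.card : ℝ)) * ∑ m ∈ S, η m := by
  rcases S.eq_empty_or_nonempty with rfl | hne
  · simp
  have hn : (0:ℝ) < S.card := by exact_mod_cast Finset.card_pos.mpr hne
  have hn1 : (1:ℝ) ≤ S.card := by exact_mod_cast Finset.card_pos.mpr hne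
  have hcoef : (0:ℝ) ≤ 1 - 1/(S.card:ℝ) := by
    have : 1/(S.card:ℝ) ≤ 1 := by
      rw [div_le_one hn]; exact hn1
    linarith
  set s := ∑ m ∈ S, η m with hs
  have hs0 : 0 ≤ s := Finset.sum_nonneg hη
  have key : ∀ ℓ ∈ S, |η ℓ - s / S.card| ≤ (1 - 1/(S.card:ℝ)) * η ℓ + (s - η ℓ)/(S.card:ℝ) := by
    intro ℓ hℓ
    have h1 : η ℓ ≤ s := Finset.single_le_sum hη hℓ
    have h2 : 0 ≤ η ℓ := hη ℓ hℓ
    have hid : η ℓ - s / (S.card:ℝ) = (1 - 1/(S.card:ℝ)) * η ℓ - (s - η ℓ)/(S.card:ℝ) := by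
      field_simp; ring
    rw [hid]
    refine (abs_sub _ _).trans ?_
    have e1 : |(1 - 1/(S.card:ℝ)) * η ℓ| = (1 - 1/(S.card:ℝ)) * η ℓ :=
      abs_of_nonneg (by positivity)
    have e2 : |(s - η ℓ)/(S.card:ℝ)| = (s - η ℓ)/(S.card:ℝ) :=
      abs_of_nonneg (div_nonneg (by linarith) hn.le)
    rw [e1, e2]
  calc ∑ ℓ ∈ S, |η ℓ - s / (S.card:ℝ)| ≤
      ∑ ℓ ∈ S, ((1 - 1/(S.card:ℝ)) * η ℓ + (s - η ℓ)/(S.card:ℝ)) := Finset.sum_le_sum key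
    _ = 2 * (((S.card : ℝ) - 1) / (S.card : ℝ)) * s := by
        rw [Finset.sum_add_distrib, ← Finset.mul_sum, ← Finset.sum_div, Finset.sum_sub_distrib,
          Finset.sum_const, nsmul_eq_mul, ← hs]
        field_simp
        ring

lemma cs_bound (S : Finset ℕ) (η ε : ℕ → ℝ)
    (h0 : ∀ ℓ ∈ S, 0 ≤ η ℓ) (h1 : ∀ ℓ ∈ S, η ℓ < 1)
    (hεb : ∀ ℓ ∈ S, η ℓ / (1 - η ℓ) ≤ ε ℓ) :
    (S.card : ℝ) * ∑ ℓ ∈ S, η ℓ ≤ ((S.card : ℝ) - ∑ ℓ ∈ S, η ℓ) * ∑ ℓ ∈ S, ε ℓ := by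
  set s := ∑ ℓ ∈ S, η ℓ with hs
  set E := ∑ ℓ ∈ S, ε ℓ with hE
  set Q := ∑ ℓ ∈ S, (η ℓ)^2 with hQ
  have hs0 : 0 ≤ s := Finset.sum_nonneg h0
  have hQ0 : 0 ≤ Q := Finset.sum_nonneg (fun ℓ _ => sq_nonneg _)
  have hn0 : (0:ℝ) ≤ S.card := Nat.cast_nonneg _
  -- s ≤ n
  have hsn : s ≤ (S.card:ℝ) := by
    have := Finset.sum_le_sum (fun ℓ hℓ => (h1 ℓ hℓ).le)
    simpa using this
  -- s^2 ≤ n * Q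
  have hQs : s^2 ≤ (S.card:ℝ) * Q := by
    have := Finset.sum_mul_sq_le_sq_mul_sq S (fun _ => (1:ℝ)) η
    simpa [hs, hQ] using this
  -- A bounds
  have hA0 : (0:ℝ) ≤ ∑ ℓ ∈ S, η ℓ / (1 - η ℓ) :=
    Finset.sum_nonneg (fun ℓ hℓ => div_nonneg (h0 ℓ hℓ) (by linarith [h1 ℓ hℓ]))
  have hAE : ∑ ℓ ∈ S, η ℓ / (1 - η ℓ) ≤ E := Finset.sum_le_sum hεb
  have hE0 : 0 ≤ E := le_trans hA0 hAE
  -- B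
  have hB0 : (0:ℝ) ≤ ∑ ℓ ∈ S, η ℓ * (1 - η ℓ) :=
    Finset.sum_nonneg (fun ℓ hℓ => mul_nonneg (h0 ℓ hℓ) (by linarith [h1 ℓ hℓ]))
  have hBval : ∑ ℓ ∈ S, η ℓ * (1 - η ℓ) = s - Q := by
    rw [hs, hQ, ← Finset.sum_sub_distrib]
    exact Finset.sum_congr rfl (fun ℓ _ => by ring)
  -- Cauchy-Schwarz: s^2 ≤ A * B
  have hcs : s^2 ≤ (∑ ℓ ∈ S, η ℓ / (1 - η ℓ)) * ∑ ℓ ∈ S, η ℓ * (1 - η ℓ) := by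
    have key := Finset.sum_mul_sq_le_sq_mul_sq S
      (fun ℓ => Real.sqrt (η ℓ / (1 - η ℓ))) (fun ℓ => Real.sqrt (η ℓ * (1 - η ℓ)))
    have e1 : ∀ ℓ ∈ S, Real.sqrt (η ℓ / (1 - η ℓ)) * Real.sqrt (η ℓ * (1 - η ℓ)) = η ℓ := by
      intro ℓ hℓ
      have hd : (0:ℝ) < 1 - η ℓ := by linarith [h1 ℓ hℓ]
      rw [← Real.sqrt_mul (div_nonneg (h0 ℓ hℓ) hd.le)]
      have : η ℓ / (1 - η ℓ) * (η ℓ * (1 - η ℓ)) = (η ℓ)^2 := by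
        field_simp
      rw [this, Real.sqrt_sq (h0 ℓ hℓ)]
    have e2 : ∀ ℓ ∈ S, (Real.sqrt (η ℓ / (1 - η ℓ)))^2 = η ℓ / (1 - η ℓ) := by
      intro ℓ hℓ
      exact Real.sq_sqrt (div_nonneg (h0 ℓ hℓ) (by linarith [h1 ℓ hℓ]))
    have e3 : ∀ ℓ ∈ S, (Real.sqrt (η ℓ * (1 - η ℓ)))^2 = η ℓ * (1 - η ℓ) := by
      intro ℓ hℓ
      exact Real.sq_sqrt (mul_nonneg (h0 ℓ hℓ) (by linarith [h1 ℓ hℓ]))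
    rw [Finset.sum_congr rfl e1, Finset.sum_congr rfl e2, Finset.sum_congr rfl e3] at key
    exact key
  have hAB : s^2 ≤ E * (s - Q) := by
    calc s^2 ≤ (∑ ℓ ∈ S, η ℓ / (1 - η ℓ)) * ∑ ℓ ∈ S, η ℓ * (1 - η ℓ) := hcs
      _ ≤ E * (s - Q) := by
          rw [← hBval]
          exact mul_le_mul_of_nonneg_right hAE hB0
  rcases eq_or_lt_of_le hs0 with h | h
  · rw [← h]
    have : (0:ℝ) ≤ ((S.card:ℝ) - 0) * E := by
      apply mul_nonneg _ hE0
      simpa using hn0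
    simpa using this
  · nlinarith [mul_le_mul_of_nonneg_left hAB hn0, mul_le_mul_of_nonneg_left hQs hE0,
      mul_pos h h]

lemma core_le (S : Finset ℕ) (hS : 2 ≤ S.card) (w ε : ℕ → ℝ)
    (hw0 : ∀ ℓ ∈ S, 0 < w ℓ) (hw1 : ∀ ℓ ∈ S, w ℓ ≤ 1)
    (hε : ∀ ℓ ∈ S, 0 ≤ ε ℓ)
    (hlow : ∀ ℓ ∈ S, 1 / (1 + ε ℓ) ≤ w ℓ) :
    (1/2) * ∑ ℓ ∈ S, |w ℓ / (∑ m ∈ S, w m) - 1 / (S.card : ℝ)| ≤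
      (1 / ((S.card : ℝ) - 1)) * ∑ ℓ ∈ S, ε ℓ := by
  have hne : S.Nonempty := Finset.card_pos.mp (by omega)
  have hn2 : (2:ℝ) ≤ S.card := by exact_mod_cast hS
  have hn0 : (0:ℝ) < S.card := by linarith
  set η : ℕ → ℝ := fun ℓ => 1 - w ℓ with hηdef
  have hη0 : ∀ ℓ ∈ S, 0 ≤ η ℓ := fun ℓ hℓ => by
    simp only [hηdef]; linarith [hw1 ℓ hℓ]
  have hη1 : ∀ ℓ ∈ S, η ℓ < 1 := fun ℓ hℓ => by
    simp only [hηdef]; linarith [hw0 ℓ hℓ]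
  set s := ∑ ℓ ∈ S, η ℓ with hsdef
  set E := ∑ ℓ ∈ S, ε ℓ with hEdef
  set W := ∑ m ∈ S, w m with hWdef
  have hs0 : 0 ≤ s := Finset.sum_nonneg hη0
  have hWs : W = (S.card:ℝ) - s := by
    rw [hWdef, hsdef, Finset.sum_sub_distrib, Finset.sum_const, nsmul_eq_mul, mul_one]
    ring
  have hW0 : 0 < W := Finset.sum_pos hw0 hne
  have hεb : ∀ ℓ ∈ S, η ℓ / (1 - η ℓ) ≤ ε ℓ := by
    intro ℓ hℓ
    have h1e : (0:ℝ) < 1 + ε ℓ := by linarith [hε ℓ hℓ]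
    have := hlow ℓ hℓ
    have hw := hw0 ℓ hℓ
    have h2 : 1 ≤ w ℓ * (1 + ε ℓ) := by
      rw [div_le_iff₀ h1e] at this; linarith
    have : (1 - w ℓ) / w ℓ ≤ ε ℓ := by
      rw [div_le_iff₀ hw]; nlinarith
    simpa only [hηdef, sub_sub_cancel] using this
  have hcs := cs_bound S η ε hη0 hη1 hεb
  rw [← hsdef, ← hEdef] at hcs
  have hE0 : 0 ≤ E := Finset.sum_nonneg hε
  -- pointwise identity
  have hpt : ∀ ℓ ∈ S, |w ℓ / W - 1 / (S.card:ℝ)| = |η ℓ - s/(S.card:ℝ)| / W := by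
    intro ℓ hℓ
    have : w ℓ / W - 1/(S.card:ℝ) = (s/(S.card:ℝ) - η ℓ) / W := by
      have hw : w ℓ = 1 - η ℓ := by simp [hηdef]
      rw [hw, hWs]
      have hns : (S.card:ℝ) - s ≠ 0 := by rw [← hWs]; exact hW0.ne'
      field_simp
      ring
    rw [this, abs_div, abs_of_pos hW0, abs_sub_comm]
  have hsum : ∑ ℓ ∈ S, |w ℓ / W - 1/(S.card:ℝ)| ≤ (2 * (((S.card:ℝ) - 1)/(S.card:ℝ)) * s) / W := by
    rw [Finset.sum_congr rfl hpt, ← Finset.sum_div]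
    gcongr
    exact mad_bound S η hη0
  have hfin : ((S.card:ℝ) - 1) * s / ((S.card:ℝ) * W) ≤ E / ((S.card:ℝ) - 1) := by
    rw [div_le_div_iff₀ (by positivity) (by linarith)]
    have hcs' : (S.card:ℝ) * s ≤ W * E := by rw [hWs]; exact hcs
    nlinarith [mul_le_mul_of_nonneg_left hcs' hn0.le, hs0, hn2]
  calc (1/2) * ∑ ℓ ∈ S, |w ℓ / W - 1/(S.card:ℝ)|
      ≤ (1/2) * ((2 * (((S.card:ℝ) - 1)/(S.card:ℝ)) * s) / W) := by linarith [hsum]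
    _ = ((S.card:ℝ) - 1) * s / ((S.card:ℝ) * W) := by
        field_simp
    _ ≤ E / ((S.card:ℝ) - 1) := hfin
    _ = (1 / ((S.card:ℝ) - 1)) * E := by ring

lemma core_ge (S : Finset ℕ) (hS : 2 ≤ S.card) (w ε : ℕ → ℝ)
    (hw1 : ∀ ℓ ∈ S, 1 ≤ w ℓ)
    (hε : ∀ ℓ ∈ S, 0 ≤ ε ℓ)
    (hupp : ∀ ℓ ∈ S, w ℓ ≤ 1 + ε ℓ) :
    (1/2) * ∑ ℓ ∈ S, |w ℓ / (∑ m ∈ S, w m) - 1 / (S.card : ℝ)| ≤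
      (1 / ((S.card : ℝ) - 1)) * ∑ ℓ ∈ S, ε ℓ := by
  have hne : S.Nonempty := Finset.card_pos.mp (by omega)
  have hn2 : (2:ℝ) ≤ S.card := by exact_mod_cast hS
  have hn0 : (0:ℝ) < S.card := by linarith
  set η : ℕ → ℝ := fun ℓ => w ℓ - 1 with hηdef
  have hη0 : ∀ ℓ ∈ S, 0 ≤ η ℓ := fun ℓ hℓ => by
    simp only [hηdef]; linarith [hw1 ℓ hℓ]
  set s := ∑ ℓ ∈ S, η ℓ with hsdef
  set E := ∑ ℓ ∈ S, ε ℓ with hEdef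
  set W := ∑ m ∈ S, w m with hWdef
  have hs0 : 0 ≤ s := Finset.sum_nonneg hη0
  have hsE : s ≤ E := Finset.sum_le_sum (fun ℓ hℓ => by
    simp only [hηdef]; linarith [hupp ℓ hℓ])
  have hE0 : 0 ≤ E := le_trans hs0 hsE
  have hWs : W = (S.card:ℝ) + s := by
    rw [hWdef, hsdef, Finset.sum_sub_distrib, Finset.sum_const, nsmul_eq_mul, mul_one]
    ring
  have hW0 : 0 < W := by rw [hWs]; linarith
  have hpt : ∀ ℓ ∈ S, |w ℓ / W - 1 / (S.card:ℝ)| = |η ℓ - s/(S.card:ℝ)| / W := by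
    intro ℓ hℓ
    have : w ℓ / W - 1/(S.card:ℝ) = (η ℓ - s/(S.card:ℝ)) / W := by
      have hw : w ℓ = 1 + η ℓ := by simp [hηdef]
      rw [hw, hWs]
      have hns : (S.card:ℝ) + s ≠ 0 := by rw [← hWs]; exact hW0.ne'
      field_simp
      ring
    rw [this, abs_div, abs_of_pos hW0]
  have hsum : ∑ ℓ ∈ S, |w ℓ / W - 1/(S.card:ℝ)| ≤ (2 * (((S.card:ℝ) - 1)/(S.card:ℝ)) * s) / W := by
    rw [Finset.sum_congr rfl hpt, ← Finset.sum_div]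
    gcongr
    exact mad_bound S η hη0
  have hfin : ((S.card:ℝ) - 1) * s / ((S.card:ℝ) * W) ≤ E / ((S.card:ℝ) - 1) := by
    rw [div_le_div_iff₀ (by positivity) (by linarith)]
    have hWn : (S.card:ℝ) ≤ W := by rw [hWs]; linarith
    nlinarith [mul_le_mul_of_nonneg_left hsE hn0.le, hs0, hn2,
      mul_le_mul_of_nonneg_left hWn hE0]
  calc (1/2) * ∑ ℓ ∈ S, |w ℓ / W - 1/(S.card:ℝ)|
      ≤ (1/2) * ((2 * (((S.card:ℝ) - 1)/(S.card:ℝ)) * s) / W) := by linarith [hsum]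
    _ = ((S.card:ℝ) - 1) * s / ((S.card:ℝ) * W) := by
        field_simp
    _ ≤ E / ((S.card:ℝ) - 1) := hfin
    _ = (1 / ((S.card:ℝ) - 1)) * E := by ring

/-- Theorem 1 of the paper in explicit analytic form: a total variation bound
between the posterior source-distance distribution under actual side
information `κ'` and the one under the design parameter `κ`. -/
theorem stmt_5 (ℓ₁ ℓ₂ : ℕ) (h1 : 1 ≤ ℓ₁) (h12 : ℓ₁ < ℓ₂)
    (a φ κ κ' : ℝ) (ha : 0 < a) (hφ0 : 0 ≤ φ) (hφ1 : φ ≤ 1)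
    (hκ : (ℓ₂ : ℝ) < κ) (hκ' : (ℓ₂ : ℝ) < κ')
    (φl K : ℕ → ℝ)
    (hφl : ∀ ℓ ∈ Finset.Icc ℓ₁ ℓ₂, φl ℓ ∈ Set.Icc 0 φ)
    (hK : ∀ ℓ ∈ Finset.Icc ℓ₁ ℓ₂, 0 < K ℓ)
    (g F : ℝ → ℕ → ℝ)
    (hg : ∀ (τ : ℝ) (ℓ : ℕ),
      g τ ℓ = (ℓ : ℝ) / (1 - Real.exp (-(a * (τ - (ℓ : ℝ))))) + 1 / (1 - Real.exp (-a)))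
    (hF : ∀ (τ : ℝ) (ℓ : ℕ), F τ ℓ = K ℓ * Real.exp (-(a * φl ℓ * g τ ℓ)))
    (pstar : ℕ → ℝ)
    (hps : ∀ ℓ : ℕ, pstar ℓ = (1 / F κ ℓ) / ∑ ℓ' ∈ Finset.Icc ℓ₁ ℓ₂, 1 / F κ ℓ')
    (q : ℝ → ℕ → ℝ)
    (hq : ∀ (τ : ℝ) (ℓ : ℕ),
      q τ ℓ = pstar ℓ * F τ ℓ / ∑ ℓ' ∈ Finset.Icc ℓ₁ ℓ₂, pstar ℓ' * F τ ℓ')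
    (Δ : ℕ → ℝ)
    (hΔ : ∀ ℓ : ℕ, Δ ℓ = (ℓ : ℝ) *
      |1 / (1 - Real.exp (-(a * (κ' - (ℓ : ℝ))))) - 1 / (1 - Real.exp (-(a * (κ - (ℓ : ℝ)))))|) :
    (1 / 2) * ∑ ℓ ∈ Finset.Icc ℓ₁ ℓ₂, |q κ' ℓ - q κ ℓ| ≤
      (1 / ((ℓ₂ : ℝ) - (ℓ₁ : ℝ))) *
        ∑ ℓ ∈ Finset.Icc ℓ₁ ℓ₂, (Real.exp (a * φ * Δ ℓ) - 1) := by
  set S := Finset.Icc ℓ₁ ℓ₂ with hSdef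
  have hcard : S.card = ℓ₂ + 1 - ℓ₁ := Nat.card_Icc ℓ₁ ℓ₂
  have hS2 : 2 ≤ S.card := by omega
  have hne : S.Nonempty := Finset.card_pos.mp (by omega)
  have hn1 : (S.card : ℝ) - 1 = (ℓ₂ : ℝ) - (ℓ₁ : ℝ) := by
    rw [hcard, Nat.cast_sub (by omega)]
    push_cast
    ring
  -- positivity of F
  have hFpos : ∀ (τ : ℝ), ∀ ℓ ∈ S, 0 < F τ ℓ := by
    intro τ ℓ hℓ
    rw [hF]
    exact mul_pos (hK ℓ hℓ) (Real.exp_pos _)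
  -- C
  set C := ∑ ℓ' ∈ S, 1 / F κ ℓ' with hCdef
  have hC : 0 < C :=
    Finset.sum_pos (fun ℓ hℓ => one_div_pos.mpr (hFpos κ ℓ hℓ)) hne
  -- q κ is uniform
  have hterm : ∀ ℓ ∈ S, pstar ℓ * F κ ℓ = 1 / C := by
    intro ℓ hℓ
    rw [hps]
    field_simp [(hFpos κ ℓ hℓ).ne']
  have hqκ : ∀ ℓ ∈ S, q κ ℓ = 1 / (S.card : ℝ) := by
    intro ℓ hℓ
    have hcard0 : ((S.card : ℝ)) ≠ 0 := by
      have : 0 < S.card := by omega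
      exact_mod_cast this.ne'
    rw [hq, Finset.sum_congr rfl hterm, Finset.sum_const, nsmul_eq_mul, hterm ℓ hℓ]
    rw [mul_one_div]
    field_simp
  -- w
  set w : ℕ → ℝ := fun ℓ => F κ' ℓ / F κ ℓ with hwdef
  have hw0 : ∀ ℓ ∈ S, 0 < w ℓ := fun ℓ hℓ =>
    div_pos (hFpos κ' ℓ hℓ) (hFpos κ ℓ hℓ)
  set W := ∑ m ∈ S, w m with hWdef
  have hW0 : 0 < W := Finset.sum_pos hw0 hne
  have hterm' : ∀ ℓ ∈ S, pstar ℓ * F κ' ℓ = w ℓ / C := by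
    intro ℓ hℓ
    rw [hps]
    simp only [hwdef]
    field_simp
  have hqκ' : ∀ ℓ ∈ S, q κ' ℓ = w ℓ / W := by
    intro ℓ hℓ
    rw [hq, Finset.sum_congr rfl hterm', ← Finset.sum_div, hterm' ℓ hℓ, ← hWdef]
    rw [show w ℓ / C / (W / C) = w ℓ / W from by
      field_simp]
  -- rewrite goal
  have hgoal : ∑ ℓ ∈ S, |q κ' ℓ - q κ ℓ| = ∑ ℓ ∈ S, |w ℓ / W - 1 / (S.card : ℝ)| :=
    Finset.sum_congr rfl (fun ℓ hℓ => by rw [hqκ' ℓ hℓ, hqκ ℓ hℓ])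
  set ε : ℕ → ℝ := fun ℓ => Real.exp (a * φ * Δ ℓ) - 1 with hεdef
  have hΔ0 : ∀ ℓ : ℕ, 0 ≤ Δ ℓ := fun ℓ => by rw [hΔ]; positivity
  have hε0 : ∀ ℓ ∈ S, 0 ≤ ε ℓ := by
    intro ℓ hℓ
    simp only [hεdef]
    have h := Real.one_le_exp (mul_nonneg (mul_nonneg ha.le hφ0) (hΔ0 ℓ))
    linarith
  have hD : ∀ τ : ℝ, (ℓ₂:ℝ) < τ → ∀ ℓ ∈ S, 0 < 1 - Real.exp (-(a * (τ - (ℓ:ℝ)))) := by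
    intro τ hτ ℓ hℓ
    have h2 : (ℓ:ℝ) ≤ ℓ₂ := by exact_mod_cast (Finset.mem_Icc.mp hℓ).2
    have h3 : Real.exp (-(a * (τ - (ℓ:ℝ)))) < 1 := by
      apply Real.exp_lt_one_iff.mpr
      nlinarith
    linarith
  have hwval : ∀ ℓ ∈ S, w ℓ = Real.exp (a * φl ℓ * (g κ ℓ - g κ' ℓ)) := by
    intro ℓ hℓ
    simp only [hwdef]
    rw [hF, hF, mul_div_mul_left _ _ (hK ℓ hℓ).ne', ← Real.exp_sub]
    congr 1
    ring
  have hgdiff : ∀ ℓ ∈ S, g κ ℓ - g κ' ℓ =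
      (ℓ:ℝ) * (1 / (1 - Real.exp (-(a * (κ - (ℓ:ℝ))))) -
        1 / (1 - Real.exp (-(a * (κ' - (ℓ:ℝ)))))) := by
    intro ℓ hℓ
    rw [hg, hg]
    ring
  have habs : ∀ ℓ ∈ S, |a * φl ℓ * (g κ ℓ - g κ' ℓ)| ≤ a * φ * Δ ℓ := by
    intro ℓ hℓ
    obtain ⟨hf0, hf1⟩ := hφl ℓ hℓ
    have haφ : (0:ℝ) ≤ a * φl ℓ := mul_nonneg ha.le hf0
    rw [abs_mul, abs_of_nonneg haφ]
    have hgd : |g κ ℓ - g κ' ℓ| = Δ ℓ := by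
      rw [hgdiff ℓ hℓ, abs_mul, Nat.abs_cast, abs_sub_comm, hΔ]
    rw [hgd]
    exact mul_le_mul_of_nonneg_right (mul_le_mul_of_nonneg_left hf1 ha.le) (hΔ0 ℓ)
  have h1pε : ∀ ℓ : ℕ, 1 + ε ℓ = Real.exp (a * φ * Δ ℓ) := fun ℓ => by
    simp [hεdef]
  have hupp : ∀ ℓ ∈ S, w ℓ ≤ 1 + ε ℓ := by
    intro ℓ hℓ
    rw [hwval ℓ hℓ, h1pε]
    exact Real.exp_le_exp.mpr (le_trans (le_abs_self _) (habs ℓ hℓ))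
  have hlow : ∀ ℓ ∈ S, 1 / (1 + ε ℓ) ≤ w ℓ := by
    intro ℓ hℓ
    rw [hwval ℓ hℓ, h1pε, one_div, ← Real.exp_neg]
    apply Real.exp_le_exp.mpr
    have h5 := habs ℓ hℓ
    have h6 := neg_abs_le (a * φl ℓ * (g κ ℓ - g κ' ℓ))
    linarith
  rw [show (1 / ((ℓ₂:ℝ) - (ℓ₁:ℝ))) = (1 / ((S.card:ℝ) - 1)) from by rw [hn1],
    mul_comm (1/2 : ℝ) _] at *
  rw [hgoal]
  rw [mul_comm _ (1/2 : ℝ)]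
  rcases le_total κ' κ with hcase | hcase
  · -- κ' ≤ κ : all w ≤ 1
    have hw1 : ∀ ℓ ∈ S, w ℓ ≤ 1 := by
      intro ℓ hℓ
      rw [hwval ℓ hℓ]
      have h2 : 0 < 1 - Real.exp (-(a * (κ' - (ℓ:ℝ)))) := hD κ' hκ' ℓ hℓ
      have h2' : 0 < 1 - Real.exp (-(a * (κ - (ℓ:ℝ)))) := hD κ hκ ℓ hℓ
      have h3 : Real.exp (-(a * (κ - (ℓ:ℝ)))) ≤ Real.exp (-(a * (κ' - (ℓ:ℝ)))) := by
        apply Real.exp_le_exp.mpr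
        nlinarith
      have h4 : 1 / (1 - Real.exp (-(a * (κ - (ℓ:ℝ))))) ≤
          1 / (1 - Real.exp (-(a * (κ' - (ℓ:ℝ))))) :=
        one_div_le_one_div_of_le h2 (by linarith)
      have h5 : g κ ℓ - g κ' ℓ ≤ 0 := by
        rw [hgdiff ℓ hℓ]
        apply mul_nonpos_of_nonneg_of_nonpos (Nat.cast_nonneg ℓ)
        linarith
      have h6 : a * φl ℓ * (g κ ℓ - g κ' ℓ) ≤ 0 :=
        mul_nonpos_of_nonneg_of_nonpos (mul_nonneg ha.le (hφl ℓ hℓ).1) h5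
      calc Real.exp (a * φl ℓ * (g κ ℓ - g κ' ℓ)) ≤ Real.exp 0 := Real.exp_le_exp.mpr h6
        _ = 1 := Real.exp_zero
    exact core_le S hS2 w ε hw0 hw1 hε0 hlow
  · -- κ ≤ κ' : all w ≥ 1
    have hw1 : ∀ ℓ ∈ S, 1 ≤ w ℓ := by
      intro ℓ hℓ
      rw [hwval ℓ hℓ]
      have h2 : 0 < 1 - Real.exp (-(a * (κ' - (ℓ:ℝ)))) := hD κ' hκ' ℓ hℓ
      have h2' : 0 < 1 - Real.exp (-(a * (κ - (ℓ:ℝ)))) := hD κ hκ ℓ hℓ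
      have h3 : Real.exp (-(a * (κ' - (ℓ:ℝ)))) ≤ Real.exp (-(a * (κ - (ℓ:ℝ)))) := by
        apply Real.exp_le_exp.mpr
        nlinarith
      have h4 : 1 / (1 - Real.exp (-(a * (κ' - (ℓ:ℝ))))) ≤
          1 / (1 - Real.exp (-(a * (κ - (ℓ:ℝ))))) :=
        one_div_le_one_div_of_le h2' (by linarith)
      have h5 : 0 ≤ g κ ℓ - g κ' ℓ := by
        rw [hgdiff ℓ hℓ]
        apply mul_nonneg (Nat.cast_nonneg ℓ)
        linarith
      have h6 : 0 ≤ a * φl ℓ * (g κ ℓ - g κ' ℓ) :=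
        mul_nonneg (mul_nonneg ha.le (hφl ℓ hℓ).1) h5
      calc (1:ℝ) = Real.exp 0 := Real.exp_zero.symm
        _ ≤ Real.exp (a * φl ℓ * (g κ ℓ - g κ' ℓ)) := Real.exp_le_exp.mpr h6
    exact core_ge S hS2 w ε hw1 hε0 hupp
end

section
/- Let S be a finite nonempty set with n = |S| elements, let q be a probability distribution on S, let u be the uniform distribution on S, and let ρ = (1/2)∑_{x∈S} |q(x) − u(x)| be their total variation distance. Then the Shannon entropy of q satisfies H(q) ≥ (1−ρ)·log n + ρ·log ρ − ρ, with the convention ρ·log ρ = 0 when ρ = 0. -/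
/-!
Applied to `t = n q(x)`, the pointwise inequality `t log t ≤ (t - 1)⁺ (log n + 1)` for
`0 ≤ t ≤ n` (trivial for `t ≤ 1`; for `t ≥ 1` split `t log t = (t - 1) log t + log t` and use
`log t ≤ log n`, `log t ≤ t - 1`) sums to `H(q) ≥ (1 - ρ) log n - ρ`, because the total
variation distance to the uniform distribution is `ρ = ∑ (q x - 1/n)⁺`. The theorem follows
since `ρ ≤ 1` makes `ρ log ρ ≤ 0`.
-/

open Finset Real

lemma mul_log_le_max_sub_one_mul {t m : ℝ} (ht : 0 ≤ t) (htm : t ≤ m) :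
    t * log t ≤ max (t - 1) 0 * (log m + 1) := by
  rcases le_total t 1 with ht1 | ht1
  · rw [max_eq_right (by linarith), zero_mul]
    exact mul_log_nonpos ht ht1
  · have htpos : 0 < t := by linarith
    have hlog_le : log t ≤ log m := log_le_log htpos htm
    have hlog_le_sub : log t ≤ t - 1 := log_le_sub_one_of_pos htpos
    rw [max_eq_left (by linarith)]
    calc t * log t = (t - 1) * log t + log t := by ring
      _ ≤ (t - 1) * log m + (t - 1) := by gcongr
      _ = (t - 1) * (log m + 1) := by ring

lemma mul_log_add_mul_log_le {p n : ℝ} (hn : 0 < n) (hp : 0 ≤ p) (hp1 : p ≤ 1) :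
    p * log p + p * log n ≤ max (p - 1 / n) 0 * (log n + 1) := by
  rcases hp.eq_or_lt with rfl | hp0
  · simp [hn.le]
  have hscaled :=
    mul_log_le_max_sub_one_mul (mul_nonneg hn.le hp) (mul_le_of_le_one_right hn.le hp1)
  rw [log_mul hn.ne' hp0.ne', show n * p - 1 = n * (p - 1 / n) by field_simp,
    show max (n * (p - 1 / n)) 0 = n * max (p - 1 / n) 0 by
      rw [mul_max_of_nonneg _ _ hn.le, mul_zero]] at hscaled
  exact le_of_mul_le_mul_left (by linarith) hn

lemma sum_max_zero_eq_half_sum_abs {ι : Type*} (s : Finset ι) (f : ι → ℝ)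
    (hf : ∑ i ∈ s, f i = 0) :
    ∑ i ∈ s, max (f i) 0 = 1 / 2 * ∑ i ∈ s, |f i| := by
  have hmax : ∀ i, max (f i) 0 = (f i + |f i|) / 2 := fun i => by
    rcases le_total (f i) 0 with h | h
    · rw [max_eq_right h, abs_of_nonpos h]; ring
    · rw [max_eq_left h, abs_of_nonneg h]; ring
  simp only [hmax, ← sum_div, sum_add_distrib, hf]
  ring

lemma sum_mul_log_le {α : Type*} {S : Finset α} {q : α → ℝ} {n : ℝ} (hn : 0 < n)
    (hq0 : ∀ x ∈ S, 0 ≤ q x) (hq1 : ∑ x ∈ S, q x = 1) :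
    ∑ x ∈ S, q x * log (q x) ≤ (∑ x ∈ S, max (q x - 1 / n) 0) * (log n + 1) - log n := by
  have hq_le_one : ∀ x ∈ S, q x ≤ 1 := fun x hx => hq1 ▸ single_le_sum hq0 hx
  calc ∑ x ∈ S, q x * log (q x) = ∑ x ∈ S, (q x * log (q x) + q x * log n) - log n := by
        rw [sum_add_distrib, ← sum_mul, hq1, one_mul, add_sub_cancel_right]
    _ ≤ ∑ x ∈ S, max (q x - 1 / n) 0 * (log n + 1) - log n := by
        gcongr with x hx
        exact mul_log_add_mul_log_le hn (hq0 x hx) (hq_le_one x hx)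
    _ = (∑ x ∈ S, max (q x - 1 / n) 0) * (log n + 1) - log n := by rw [sum_mul]

/-- Theorem 2 of the paper: a lower bound on the Shannon entropy of a
distribution `q` that is `ρ`-close in total variation to the uniform
distribution on a finite set `S` with `n` elements. (In Lean, `Real.log 0 = 0`,
so the convention `ρ · log ρ = 0` at `ρ = 0` holds automatically.) -/
theorem stmt_6 {α : Type*} (S : Finset α) (hS : S.Nonempty) (q : α → ℝ)
    (hq0 : ∀ x ∈ S, 0 ≤ q x) (hq1 : ∑ x ∈ S, q x = 1)
    (ρ : ℝ) (hρ : ρ = (1 / 2) * ∑ x ∈ S, |q x - 1 / (S.card : ℝ)|) :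
    (1 - ρ) * Real.log (S.card : ℝ) + ρ * Real.log ρ - ρ ≤
      -∑ x ∈ S, q x * Real.log (q x) := by
  have hn : 0 < (S.card : ℝ) := by exact_mod_cast hS.card_pos
  have hρ_pos_part : ρ = ∑ x ∈ S, max (q x - 1 / S.card) 0 := by
    rw [hρ, sum_max_zero_eq_half_sum_abs _ _ ?_]
    rw [sum_sub_distrib, hq1, sum_const, nsmul_eq_mul]
    field_simp
    ring
  have hρ0 : 0 ≤ ρ := hρ_pos_part ▸ sum_nonneg fun _ _ => le_max_right _ _
  have hρ1 : ρ ≤ 1 := hρ_pos_part ▸ hq1 ▸ sum_le_sum fun x hx =>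
    max_le (sub_le_self _ (by positivity)) (hq0 x hx)
  have hbound := sum_mul_log_le hn hq0 hq1
  have hρ_log : ρ * log ρ ≤ 0 := mul_log_nonpos hρ0 hρ1
  rw [← hρ_pos_part] at hbound
  linarith
end

section
/- Let ℓ₁ < ℓ₂ be natural numbers with ℓ₁ ≥ 1, set S = {ℓ₁, …, ℓ₂} and d = ℓ₂ − ℓ₁, let a > 0, φ ∈ [0,1], and let κ, κ' be reals with κ > ℓ₂ and κ' > ℓ₂. For each ℓ ∈ S let φ_ℓ ∈ [0, φ] and K(ℓ) > 0, and define for τ ∈ {κ, κ'}: g_τ(ℓ) = ℓ/(1 − e^{−a(τ−ℓ)}) + 1/(1 − e^{−a}), F_τ(ℓ) = K(ℓ)·e^{−a·φ_ℓ·g_τ(ℓ)}, p*(ℓ) = (1/F_κ(ℓ))/(∑_{ℓ'∈S} 1/F_κ(ℓ')), and q_τ(ℓ) = p*(ℓ)F_τ(ℓ)/(∑_{ℓ'∈S} p*(ℓ')F_τ(ℓ')). Let ρ̄ = min{1, (1/d)·∑_{ℓ∈S}(e^{a·φ·Δ(ℓ)} − 1)} with Δ(ℓ) = ℓ·|1/(1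 − e^{−a(κ'−ℓ)}) − 1/(1 − e^{−a(κ−ℓ)})|. Then the Shannon entropy of q_{κ'} satisfies H(q_{κ'}) ≥ (1−ρ̄)·log(d+1) + ρ̄·log ρ̄ − ρ̄ (with the convention ρ̄·log ρ̄ = 0 when ρ̄ = 0). -/
/-!
Since the prior `p*` is proportional to `1 / F κ`, the posterior `q κ'` is proportional to the
likelihood ratio `r ℓ = F κ' ℓ / F κ ℓ = exp (a φ_ℓ (g κ ℓ - g κ' ℓ))`, and
`|g κ ℓ - g κ' ℓ| = Δ ℓ`, so `|r ℓ - 1| ≤ t ℓ := exp (a φ Δ ℓ) - 1`. Normalizing weights within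
`t i` of `1` moves at most `(∑ t) / n` of mass away from the uniform distribution on `n` points:
on a set of size `m` the weights sum to at most `m + ∑ t`, on its complement of size `p` to at
least `p - ∑ t`. Hence the total variation `ε` between `q κ'` and uniform is at most `ρ̄`
(as `n = d + 1`). A distribution at total variation `ε` from uniform has entropy at least
`(1 - ε) log n + ε log ε - ε`: put `q i ≤ 1/n + e i`, where `∑ e i = ε`, inside the logarithm and
use `log (1 + n e) ≤ n e`. This bound is antitone in `ε` on `[0, 1]`.
-/

open Finset Real

variable {ι : Type*}

theorem abs_exp_sub_one_le_exp_abs_sub_one (x : ℝ) : |exp x - 1| ≤ exp |x| - 1 := by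
  rcases le_total 0 x with hx | hx
  · rw [abs_of_nonneg hx, abs_of_nonneg (by linarith [add_one_le_exp x])]
  · rw [abs_of_nonpos hx, abs_of_nonpos (by linarith [exp_le_one_iff.2 hx])]
    linarith [add_one_le_exp x, add_one_le_exp (-x)]

theorem abs_exp_mul_sub_one_le {a φ' φ x D : ℝ} (ha : 0 ≤ a) (hφ' : φ' ∈ Set.Icc 0 φ)
    (hx : |x| ≤ D) : |exp (a * φ' * x) - 1| ≤ exp (a * φ * D) - 1 := by
  refine (abs_exp_sub_one_le_exp_abs_sub_one _).trans ?_
  gcongr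
  rw [abs_mul, abs_of_nonneg (mul_nonneg ha hφ'.1)]
  exact mul_le_mul (by gcongr; exact hφ'.2) hx (abs_nonneg x) (mul_nonneg ha (hφ'.1.trans hφ'.2))

theorem abs_mul_exp_div_mul_exp_sub_one_le {K a φ' φ u v D : ℝ} (hK : K ≠ 0) (ha : 0 ≤ a)
    (hφ' : φ' ∈ Set.Icc 0 φ) (huv : |u - v| ≤ D) :
    |K * exp (-(a * φ' * v)) / (K * exp (-(a * φ' * u))) - 1| ≤ exp (a * φ * D) - 1 := by
  rw [mul_div_mul_left _ _ hK, ← exp_sub,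
    show -(a * φ' * v) - -(a * φ' * u) = a * φ' * (u - v) by ring]
  exact abs_exp_mul_sub_one_le ha hφ' huv

theorem inv_prior_posterior_eq {S : Finset ι} {f g : ι → ℝ} (hZ : ∑ j ∈ S, 1 / f j ≠ 0) (i : ι) :
    1 / f i / (∑ j ∈ S, 1 / f j) * g i / ∑ k ∈ S, 1 / f k / (∑ j ∈ S, 1 / f j) * g k =
      g i / f i / ∑ k ∈ S, g k / f k := by
  simp only [div_mul_eq_mul_div, one_mul]
  rw [← sum_div, div_div_div_cancel_right₀ hZ]

/-- For a probability vector `q` on `S` this is its total variation distance from the uniform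
distribution on `S`. -/
noncomputable def tvDistUniform (S : Finset ι) (q : ι → ℝ) : ℝ := ∑ i ∈ S, max (q i - 1 / #S) 0

theorem tvDistUniform_nonneg (S : Finset ι) (q : ι → ℝ) : 0 ≤ tvDistUniform S q :=
  sum_nonneg fun _ _ => le_max_right _ _

theorem one_le_card_of_sum_eq_one {S : Finset ι} {q : ι → ℝ} (hq1 : ∑ i ∈ S, q i = 1) :
    (1 : ℝ) ≤ #S := by
  exact_mod_cast (nonempty_of_sum_ne_zero (hq1 ▸ one_ne_zero)).card_pos

theorem tvDistUniform_le_one_sub_inv_card {S : Finset ι} {q : ι → ℝ} (hq0 : ∀ i ∈ S, 0 ≤ q i)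
    (hq1 : ∑ i ∈ S, q i = 1) : tvDistUniform S q ≤ 1 - 1 / #S := by
  have hn := one_le_card_of_sum_eq_one hq1
  calc tvDistUniform S q ≤ ∑ i ∈ S, (1 - 1 / #S) * q i := by
        refine sum_le_sum fun i hi => max_le ?_ (mul_nonneg ?_ (hq0 i hi))
        · have : q i / #S ≤ 1 / #S := by gcongr; exact hq1 ▸ single_le_sum hq0 hi
          linarith [show (1 - 1 / (#S : ℝ)) * q i = q i - q i / #S by ring]
        · rw [sub_nonneg, div_le_one (by linarith)]; exact hn
    _ = 1 - 1 / #S := by rw [← mul_sum, hq1, mul_one]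

theorem tvDistUniform_le_one {S : Finset ι} {q : ι → ℝ} (hq0 : ∀ i ∈ S, 0 ≤ q i)
    (hq1 : ∑ i ∈ S, q i = 1) : tvDistUniform S q ≤ 1 :=
  (tvDistUniform_le_one_sub_inv_card hq0 hq1).trans (by simp)

theorem sum_div_sum_sub_inv_card_le [DecidableEq ι] {S E : Finset ι} (hES : E ⊆ S) {r t : ι → ℝ}
    (hr : ∀ i ∈ S, 0 ≤ r i) (hR : 0 < ∑ i ∈ S, r i) (ht : ∀ i ∈ S, |r i - 1| ≤ t i) :
    ∑ i ∈ E, (r i / ∑ j ∈ S, r j - 1 / #S) ≤ (∑ i ∈ S, t i) / #S := by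
  have hn : (0 : ℝ) < #S := by exact_mod_cast (nonempty_of_sum_ne_zero hR.ne').card_pos
  set D := S \ E
  have hE : ∀ i ∈ E, i ∈ S := fun i hi => hES hi
  have hD : ∀ i ∈ D, i ∈ S := fun i hi => sdiff_subset hi
  have hcard : (#D : ℝ) + #E = #S := by exact_mod_cast card_sdiff_add_card_eq_card hES
  rw [sum_sub_distrib, ← sum_div, sum_const, nsmul_eq_mul, ← sum_sdiff hES (f := r),
    ← sum_sdiff hES (f := t), ← hcard]
  rw [← sum_sdiff hES (f := r)] at hR
  rw [← hcard] at hn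
  have hRE : ∑ i ∈ E, r i ≤ #E + ∑ i ∈ E, t i := by
    calc ∑ i ∈ E, r i ≤ ∑ i ∈ E, (1 + t i) :=
          sum_le_sum fun i hi => by linarith [(abs_le.1 (ht i (hE i hi))).2]
      _ = #E + ∑ i ∈ E, t i := by simp [sum_add_distrib]
  have hRD : #D - ∑ i ∈ D, t i ≤ ∑ i ∈ D, r i := by
    calc (#D : ℝ) - ∑ i ∈ D, t i = ∑ i ∈ D, (1 - t i) := by simp [sum_sub_distrib]
      _ ≤ ∑ i ∈ D, r i := sum_le_sum fun i hi => by linarith [(abs_le.1 (ht i (hD i hi))).1]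
  have hRE0 : 0 ≤ ∑ i ∈ E, r i := sum_nonneg fun i hi => hr i (hE i hi)
  have hRD0 : 0 ≤ ∑ i ∈ D, r i := sum_nonneg fun i hi => hr i (hD i hi)
  have hTE0 : 0 ≤ ∑ i ∈ E, t i := sum_nonneg fun i hi => (abs_nonneg _).trans (ht i (hE i hi))
  have hTD0 : 0 ≤ ∑ i ∈ D, t i := sum_nonneg fun i hi => (abs_nonneg _).trans (ht i (hD i hi))
  set RE := ∑ i ∈ E, r i
  set RD := ∑ i ∈ D, r i
  set TE := ∑ i ∈ E, t i
  set TD := ∑ i ∈ D, t i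
  -- the claim with denominators cleared
  have key : ((#D : ℝ) - (TD + TE)) * RE ≤ (#E + (TD + TE)) * RD := by
    rcases le_or_gt (#D : ℝ) (TD + TE) with h | h
    · exact (mul_nonpos_of_nonpos_of_nonneg (by linarith) hRE0).trans
        (mul_nonneg (by linarith) hRD0)
    calc ((#D : ℝ) - (TD + TE)) * RE ≤ (#D - (TD + TE)) * (#E + TE) := by gcongr
      _ ≤ (#E + (TD + TE)) * (#D - TD) := by
          nlinarith [mul_nonneg hTD0 (by linarith : (0 : ℝ) ≤ #D - TD)]
      _ ≤ (#E + (TD + TE)) * RD := by gcongr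
  field_simp
  linarith

theorem tvDistUniform_div_sum_le {S : Finset ι} {r t : ι → ℝ} (hr : ∀ i ∈ S, 0 ≤ r i)
    (hR : 0 < ∑ i ∈ S, r i) (ht : ∀ i ∈ S, |r i - 1| ≤ t i) :
    tvDistUniform S (fun i => r i / ∑ j ∈ S, r j) ≤ (∑ i ∈ S, t i) / #S := by
  classical
  calc tvDistUniform S (fun i => r i / ∑ j ∈ S, r j)
      = ∑ i ∈ S with 0 < r i / ∑ j ∈ S, r j - 1 / #S, (r i / ∑ j ∈ S, r j - 1 / #S) := by
        rw [sum_filter]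
        refine sum_congr rfl fun i _ => ?_
        split_ifs with h
        exacts [max_eq_left h.le, max_eq_right (not_lt.1 h)]
    _ ≤ (∑ i ∈ S, t i) / #S := sum_div_sum_sub_inv_card_le (filter_subset _ _) hr hR ht

theorem neg_mul_log_ge {n q ε : ℝ} (hn : 0 < n) (hq : 0 ≤ q) (hqε : max (q - 1 / n) 0 ≤ ε) :
    q * log n - max (q - 1 / n) 0 * (1 + log n + log (1 / n + ε)) ≤ -(q * log q) := by
  rcases le_total q (1 / n) with hqn | hqn
  · rw [max_eq_right (by linarith), zero_mul, sub_zero]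
    rcases hq.eq_or_lt with rfl | hq
    · simp
    have : log q ≤ -log n := by simpa using log_le_log hq hqn
    nlinarith
  · rw [max_eq_left (by linarith)] at hqε ⊢
    have hq : 0 < q := lt_of_lt_of_le (by positivity) hqn
    have hlog_nq : log n + log q ≤ n * q - 1 := by
      rw [← log_mul hn.ne' hq.ne']; exact log_le_sub_one_of_pos (by positivity)
    have hlog_q : log q ≤ log (1 / n + ε) := log_le_log hq (by linarith)
    have h1 : (1 / n) * (log n + log q) ≤ (1 / n) * (n * q - 1) := by gcongr
    have h2 : (q - 1 / n) * log q ≤ (q - 1 / n) * log (1 / n + ε) := by gcongr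
    have h3 : (1 / n) * (n * q - 1) = q - 1 / n := by field_simp
    linarith

theorem entropy_ge_of_tvDistUniform {S : Finset ι} {q : ι → ℝ} (hq0 : ∀ i ∈ S, 0 ≤ q i)
    (hq1 : ∑ i ∈ S, q i = 1) :
    (1 - tvDistUniform S q) * log #S + tvDistUniform S q * log (tvDistUniform S q)
      - tvDistUniform S q ≤ -∑ i ∈ S, q i * log (q i) := by
  have hn : (1 : ℝ) ≤ #S := one_le_card_of_sum_eq_one hq1
  have hε1 := tvDistUniform_le_one_sub_inv_card hq0 hq1
  have hε0 := tvDistUniform_nonneg S q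
  set n : ℝ := ((#S : ℕ) : ℝ)
  set ε := tvDistUniform S q with hε
  have hsum : log n - ε * (1 + log n + log (1 / n + ε)) ≤ -∑ i ∈ S, q i * log (q i) := by
    calc log n - ε * (1 + log n + log (1 / n + ε))
        = ∑ i ∈ S, (q i * log n - max (q i - 1 / n) 0 * (1 + log n + log (1 / n + ε))) := by
          rw [sum_sub_distrib, ← sum_mul, ← sum_mul, hq1, one_mul, hε, tvDistUniform]
      _ ≤ ∑ i ∈ S, -(q i * log (q i)) := sum_le_sum fun i hi =>
          neg_mul_log_ge (by linarith) (hq0 i hi)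
            (single_le_sum (f := fun i => max (q i - 1 / n) 0) (fun _ _ => le_max_right _ _) hi)
      _ = -∑ i ∈ S, q i * log (q i) := sum_neg_distrib _
  -- `ε ≤ 1 - 1/n` gives `ε * (1/n + ε) ≤ 1`
  have hlog : ε * log ε + ε * log (1 / n + ε) ≤ 0 := by
    rcases hε0.eq_or_lt with h | h
    · simp [← h]
    rw [← mul_add, ← log_mul h.ne' (by positivity)]
    have : 0 < 1 / n := by positivity
    exact mul_nonpos_of_nonneg_of_nonpos h.le (log_nonpos (by positivity) (by nlinarith))
  linarith

theorem antitoneOn_one_sub_mul_log_add_mul_log_sub {n : ℝ} (hn : 1 ≤ n) :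
    AntitoneOn (fun t => (1 - t) * log n + t * log t - t) (Set.Icc 0 1) := by
  rintro ε ⟨hε, -⟩ ρ ⟨-, hρ⟩ hερ
  have hlog_ratio : ε * (log ρ - log ε) ≤ ρ - ε := by
    rcases hε.eq_or_lt with rfl | hε
    · simp only [zero_mul, sub_zero]; linarith
    have hρ0 : 0 < ρ := hε.trans_le hερ
    calc ε * (log ρ - log ε) = ε * log (ρ / ε) := by rw [log_div hρ0.ne' hε.ne']
      _ ≤ ε * (ρ / ε - 1) := by gcongr; exact log_le_sub_one_of_pos (by positivity)
      _ = ρ - ε := by field_simp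
  have h1 : (ρ - ε) * log ρ ≤ 0 :=
    mul_nonpos_of_nonneg_of_nonpos (by linarith) (log_nonpos (by linarith) hρ)
  have h2 : 0 ≤ (ρ - ε) * log n := mul_nonneg (by linarith) (log_nonneg hn)
  simp only
  linarith

theorem entropy_ge_of_tvDistUniform_le {S : Finset ι} {q : ι → ℝ} (hq0 : ∀ i ∈ S, 0 ≤ q i)
    (hq1 : ∑ i ∈ S, q i = 1) {ρ : ℝ} (hε : tvDistUniform S q ≤ ρ) (hρ : ρ ≤ 1) :
    (1 - ρ) * log #S + ρ * log ρ - ρ ≤ -∑ i ∈ S, q i * log (q i) :=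
  (antitoneOn_one_sub_mul_log_add_mul_log_sub (one_le_card_of_sum_eq_one hq1)
    ⟨tvDistUniform_nonneg S q, tvDistUniform_le_one hq0 hq1⟩
    ⟨(tvDistUniform_nonneg S q).trans hε, hρ⟩ hε).trans (entropy_ge_of_tvDistUniform hq0 hq1)

theorem stmt_16_general (ℓ₁ ℓ₂ : ℕ) (h12 : ℓ₁ < ℓ₂)
    (a φ κ κ' : ℝ) (ha : 0 < a)
    (φl K : ℕ → ℝ)
    (hφl : ∀ ℓ ∈ Finset.Icc ℓ₁ ℓ₂, φl ℓ ∈ Set.Icc 0 φ)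
    (hK : ∀ ℓ ∈ Finset.Icc ℓ₁ ℓ₂, 0 < K ℓ)
    (g F : ℝ → ℕ → ℝ)
    (hg : ∀ (τ : ℝ) (ℓ : ℕ),
      g τ ℓ = (ℓ : ℝ) / (1 - Real.exp (-(a * (τ - (ℓ : ℝ))))) + 1 / (1 - Real.exp (-a)))
    (hF : ∀ (τ : ℝ) (ℓ : ℕ), F τ ℓ = K ℓ * Real.exp (-(a * φl ℓ * g τ ℓ)))
    (pstar : ℕ → ℝ)
    (hps : ∀ ℓ : ℕ, pstar ℓ = (1 / F κ ℓ) / ∑ ℓ' ∈ Finset.Icc ℓ₁ ℓ₂, 1 / F κ ℓ')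
    (q : ℝ → ℕ → ℝ)
    (hq : ∀ (τ : ℝ) (ℓ : ℕ),
      q τ ℓ = pstar ℓ * F τ ℓ / ∑ ℓ' ∈ Finset.Icc ℓ₁ ℓ₂, pstar ℓ' * F τ ℓ')
    (Δ : ℕ → ℝ)
    (hΔ : ∀ ℓ : ℕ, Δ ℓ = (ℓ : ℝ) *
      |1 / (1 - Real.exp (-(a * (κ' - (ℓ : ℝ))))) - 1 / (1 - Real.exp (-(a * (κ - (ℓ : ℝ)))))|)
    (ρ : ℝ)
    (hρ : ρ = min 1 ((1 / ((ℓ₂ : ℝ) - (ℓ₁ : ℝ))) *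
      ∑ ℓ ∈ Finset.Icc ℓ₁ ℓ₂, (Real.exp (a * φ * Δ ℓ) - 1))) :
    (1 - ρ) * Real.log (((ℓ₂ : ℝ) - (ℓ₁ : ℝ)) + 1) + ρ * Real.log ρ - ρ ≤
      -∑ ℓ ∈ Finset.Icc ℓ₁ ℓ₂, q κ' ℓ * Real.log (q κ' ℓ) := by
  set S := Finset.Icc ℓ₁ ℓ₂ with hS
  have hSne : S.Nonempty := nonempty_Icc.2 h12.le
  have hcard : ((#S : ℕ) : ℝ) = ((ℓ₂ : ℝ) - ℓ₁) + 1 := by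
    rw [hS, Nat.card_Icc, Nat.cast_sub (by omega)]; push_cast; ring
  have hFpos : ∀ τ, ∀ ℓ ∈ S, 0 < F τ ℓ := fun τ ℓ hℓ => by
    rw [hF]; exact mul_pos (hK ℓ hℓ) (exp_pos _)
  set r : ℕ → ℝ := fun ℓ => F κ' ℓ / F κ ℓ with hr_def
  have hr0 : ∀ ℓ ∈ S, 0 < r ℓ := fun ℓ hℓ => div_pos (hFpos κ' ℓ hℓ) (hFpos κ ℓ hℓ)
  have hR : 0 < ∑ ℓ ∈ S, r ℓ := sum_pos hr0 hSne
  have hq_eq : q κ' = fun ℓ => r ℓ / ∑ j ∈ S, r j := funext fun ℓ => by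
    simp only [hq, hps]
    exact inv_prior_posterior_eq (sum_pos (fun j hj => one_div_pos.2 (hFpos κ j hj)) hSne).ne' ℓ
  have hr : ∀ ℓ ∈ S, |r ℓ - 1| ≤ exp (a * φ * Δ ℓ) - 1 := fun ℓ hℓ => by
    rw [hr_def]; dsimp only; rw [hF, hF]
    refine abs_mul_exp_div_mul_exp_sub_one_le (hK ℓ hℓ).ne' ha.le (hφl ℓ hℓ) (le_of_eq ?_)
    rw [hg, hg, hΔ, abs_sub_comm, add_sub_add_right_eq_sub, div_eq_mul_one_div (ℓ : ℝ),
      div_eq_mul_one_div (ℓ : ℝ), ← mul_sub, abs_mul, Nat.abs_cast]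
  have hq0 : ∀ ℓ ∈ S, 0 ≤ q κ' ℓ := fun ℓ hℓ => by
    rw [hq_eq]; exact div_nonneg (hr0 ℓ hℓ).le hR.le
  have hq1 : ∑ ℓ ∈ S, q κ' ℓ = 1 := by rw [hq_eq, ← sum_div, div_self hR.ne']
  have hε : tvDistUniform S (q κ') ≤ ρ := by
    refine hρ ▸ le_min (tvDistUniform_le_one hq0 hq1) ?_
    have hT : 0 ≤ ∑ ℓ ∈ S, (exp (a * φ * Δ ℓ) - 1) := sum_nonneg fun ℓ hℓ =>
      (abs_nonneg _).trans (hr ℓ hℓ)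
    have hd : (0 : ℝ) < ℓ₂ - ℓ₁ := sub_pos.2 (by exact_mod_cast h12)
    calc tvDistUniform S (q κ') ≤ (∑ ℓ ∈ S, (exp (a * φ * Δ ℓ) - 1)) / #S :=
          hq_eq ▸ tvDistUniform_div_sum_le (fun ℓ hℓ => (hr0 ℓ hℓ).le) hR hr
      _ ≤ 1 / ((ℓ₂ : ℝ) - ℓ₁) * ∑ ℓ ∈ S, (exp (a * φ * Δ ℓ) - 1) := by
          rw [hcard, one_div_mul_eq_div]
          gcongr; linarith
  rw [← hcard]
  exact entropy_ge_of_tvDistUniform_le hq0 hq1 hε (hρ ▸ min_le_left _ _)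

/-- Non-asymptotic combination of Theorems 1 and 2 of the paper: the Shannon
entropy of the posterior source-distance distribution `q κ'` under actual side
information `κ'` is lower bounded in terms of the (clipped) total variation
bound `ρ̄`. (In Lean, `Real.log 0 = 0`, so the convention `ρ̄ · log ρ̄ = 0` at
`ρ̄ = 0` holds automatically.) -/
theorem stmt_16 (ℓ₁ ℓ₂ : ℕ) (h1 : 1 ≤ ℓ₁) (h12 : ℓ₁ < ℓ₂)
    (a φ κ κ' : ℝ) (ha : 0 < a) (hφ0 : 0 ≤ φ) (hφ1 : φ ≤ 1)
    (hκ : (ℓ₂ : ℝ) < κ) (hκ' : (ℓ₂ : ℝ) < κ')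
    (φl K : ℕ → ℝ)
    (hφl : ∀ ℓ ∈ Finset.Icc ℓ₁ ℓ₂, φl ℓ ∈ Set.Icc 0 φ)
    (hK : ∀ ℓ ∈ Finset.Icc ℓ₁ ℓ₂, 0 < K ℓ)
    (g F : ℝ → ℕ → ℝ)
    (hg : ∀ (τ : ℝ) (ℓ : ℕ),
      g τ ℓ = (ℓ : ℝ) / (1 - Real.exp (-(a * (τ - (ℓ : ℝ))))) + 1 / (1 - Real.exp (-a)))
    (hF : ∀ (τ : ℝ) (ℓ : ℕ), F τ ℓ = K ℓ * Real.exp (-(a * φl ℓ * g τ ℓ)))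
    (pstar : ℕ → ℝ)
    (hps : ∀ ℓ : ℕ, pstar ℓ = (1 / F κ ℓ) / ∑ ℓ' ∈ Finset.Icc ℓ₁ ℓ₂, 1 / F κ ℓ')
    (q : ℝ → ℕ → ℝ)
    (hq : ∀ (τ : ℝ) (ℓ : ℕ),
      q τ ℓ = pstar ℓ * F τ ℓ / ∑ ℓ' ∈ Finset.Icc ℓ₁ ℓ₂, pstar ℓ' * F τ ℓ')
    (Δ : ℕ → ℝ)
    (hΔ : ∀ ℓ : ℕ, Δ ℓ = (ℓ : ℝ) *
      |1 / (1 - Real.exp (-(a * (κ' - (ℓ : ℝ))))) - 1 / (1 - Real.exp (-(a * (κ - (ℓ : ℝ)))))|)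
    (ρ : ℝ)
    (hρ : ρ = min 1 ((1 / ((ℓ₂ : ℝ) - (ℓ₁ : ℝ))) *
      ∑ ℓ ∈ Finset.Icc ℓ₁ ℓ₂, (Real.exp (a * φ * Δ ℓ) - 1))) :
    (1 - ρ) * Real.log (((ℓ₂ : ℝ) - (ℓ₁ : ℝ)) + 1) + ρ * Real.log ρ - ρ ≤
      -∑ ℓ ∈ Finset.Icc ℓ₁ ℓ₂, q κ' ℓ * Real.log (q κ' ℓ) :=
  stmt_16_general ℓ₁ ℓ₂ h12 a φ κ κ' ha φl K hφl hK g F hg hF pstar hps q hq Δ hΔ ρ hρ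
end
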